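/- Let k be a positive definite function on S and let X̲ be a finite set of distinct points in S with k(X̲,X̲) invertible. Then the Nyström function ξ_1(x,x') = k(x,X̲) k(X̲,X̲)^{-1} k(X̲,x') is a positive definite function on S. -/

import Mathlib

/-- The Gram matrix `k(X̲,X̲)` of a kernel `k` at the landmark points `u 0, …, u (r-1)`. -/
noncomputable def gramMatrix {S : Type*} (k : S → S → ℝ) {r : ℕ} (u : Fin r → S) :
    Matrix (Fin r) (Fin r) ℝ :=
  Matrix.of fun a b => k (u a) (u b)

/-- The Nyström approximation `k(x,X̲) k(X̲,X̲)⁻¹ k(X̲,x')`. -/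
noncomputable def nystrom {S : Type*} (k : S → S → ℝ) {r : ℕ} (u : Fin r → S)
    (x x' : S) : ℝ :=
  ∑ a, ∑ b, k x (u a) * (gramMatrix k u)⁻¹ a b * k (u b) x'

/-- A symmetric function `k : S × S → ℝ` is positive definite if every quadratic form
`∑ᵢⱼ αᵢ αⱼ k(xᵢ,xⱼ)` is nonnegative. -/
def IsPosDefKernel {S : Type*} (k : S → S → ℝ) : Prop :=
  (∀ x x', k x x' = k x' x) ∧
  ∀ (n : ℕ) (x : Fin n → S) (α : Fin n → ℝ),
    0 ≤ ∑ i, ∑ j, α i * α j * k (x i) (x j)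

/-- A symmetric function `k : S × S → ℝ` is strictly positive definite if every quadratic
form `∑ᵢⱼ αᵢ αⱼ k(xᵢ,xⱼ)` at distinct points with not-all-zero coefficients is positive. -/
def IsStrictPosDefKernel {S : Type*} (k : S → S → ℝ) : Prop :=
  (∀ x x', k x x' = k x' x) ∧
  ∀ (n : ℕ) (x : Fin n → S) (α : Fin n → ℝ),
    Function.Injective x → α ≠ 0 →
      0 < ∑ i, ∑ j, α i * α j * k (x i) (x j)

/-! The Gram matrix of the Nyström kernel at points `x₁, …, xₙ` is `V K⁻¹ Vᵀ`, where
`K = k(X̲,X̲)` and `V = k(x,X̲)`. Since `k` is positive definite, `K` is positive semidefinite,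
hence so are `K⁻¹` and its congruence `V K⁻¹ Vᵀ`. -/

open Matrix

noncomputable def kernelMatrix {S : Type*} (k : S → S → ℝ) {m n : ℕ} (x : Fin m → S)
    (y : Fin n → S) : Matrix (Fin m) (Fin n) ℝ :=
  of fun i j => k (x i) (y j)

section

variable {S : Type*} {k : S → S → ℝ}

theorem kernelMatrix_conjTranspose (hk : ∀ x x', k x x' = k x' x) {m n : ℕ} (x : Fin m → S)
    (y : Fin n → S) : (kernelMatrix k x y)ᴴ = kernelMatrix k y x := by
  ext i j
  exact hk _ _

theorem gramMatrix_isHermitian (hk : ∀ x x', k x x' = k x' x) {n : ℕ} (x : Fin n → S) :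
    (gramMatrix k x).IsHermitian := by
  ext i j
  exact hk _ _

theorem dotProduct_gramMatrix_mulVec {n : ℕ} (x : Fin n → S) (α : Fin n → ℝ) :
    star α ⬝ᵥ (gramMatrix k x *ᵥ α) = ∑ i, ∑ j, α i * α j * k (x i) (x j) := by
  simp only [dotProduct, mulVec, gramMatrix, of_apply, star_trivial,
    Finset.mul_sum]
  exact Finset.sum_congr rfl fun i _ => Finset.sum_congr rfl fun j _ => by ring

theorem isPosDefKernel_iff_posSemidef_gramMatrix :
    IsPosDefKernel k ↔ ∀ (n : ℕ) (x : Fin n → S), (gramMatrix k x).PosSemidef := by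
  constructor
  · rintro ⟨hsymm, hnonneg⟩ n x
    refine .of_dotProduct_mulVec_nonneg (gramMatrix_isHermitian hsymm x) fun α => ?_
    rw [dotProduct_gramMatrix_mulVec]
    exact hnonneg n x α
  · intro h
    refine ⟨fun x x' => ?_, fun n x α => ?_⟩
    · simpa [gramMatrix] using congrFun (congrFun (h 2 ![x', x]).isHermitian 0) 1
    · rw [← dotProduct_gramMatrix_mulVec]
      exact (h n x).dotProduct_mulVec_nonneg α

theorem gramMatrix_nystrom {r n : ℕ} (u : Fin r → S) (x : Fin n → S) :
    gramMatrix (nystrom k u) x =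
      kernelMatrix k x u * (gramMatrix k u)⁻¹ * kernelMatrix k u x := by
  ext i j
  simp only [gramMatrix, nystrom, kernelMatrix, mul_apply, of_apply,
    Finset.sum_mul]
  exact Finset.sum_comm

end

theorem nystrom_posDef_general {S : Type*} (k : S → S → ℝ)
    (hk : IsPosDefKernel k)
    {r : ℕ} (u : Fin r → S) :
    IsPosDefKernel (nystrom k u) := by
  have hgram := isPosDefKernel_iff_posSemidef_gramMatrix.mp hk
  refine isPosDefKernel_iff_posSemidef_gramMatrix.mpr fun n x => ?_
  rw [gramMatrix_nystrom, ← kernelMatrix_conjTranspose hk.1 x u]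
  exact (hgram r u).inv.mul_mul_conjTranspose_same _

/-- if `k` is positive definite and `X̲` is a finite set of distinct points
with `k(X̲,X̲)` invertible, then the Nyström function
`ξ₁(x,x') = k(x,X̲) k(X̲,X̲)⁻¹ k(X̲,x')` is positive definite on `S`. -/
theorem nystrom_posDef {S : Type*} (k : S → S → ℝ)
    (hk : IsPosDefKernel k)
    {r : ℕ} (u : Fin r → S) (hu : Function.Injective u)
    (hK : IsUnit (gramMatrix k u).det) :
    IsPosDefKernel (nystrom k u) :=
  nystrom_posDef_general k hk u
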